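/- Let d ≥ 1, p ∈ [1,∞], ε > 0, δ ≥ 0, and consider balanced Gaussian mixture data with means μ₊, μ₋ and σ > 0, with μ = (μ₊ − μ₋)/2 ≠ 0 and μ₀ = μ/‖μ‖₂. Consider the Bayes classifier with weight w = μ₀ and bias b = −μ₀·μ̄, and assume δ·‖μ₀‖_p ≤ ε. Then the (ε,δ)-ℓp-strong-adversarial-error rate — the probability under the balanced mixture that a point is misclassified or has an (ε,δ)-ℓp-strong-adversarial example, namely (1/2)·P_{N(μ₊,σ²I_d)}({x : w·x + b ≤ 0, or there exists v with ‖v‖_p ≤ ε, |v·μ₀| ≤ δ and w·(x+v) + b ≤ 0}) + (1/2)·P_{N(μ₋,σ²I_d)}({x : w·x + b > 0, or there exists v with ‖v‖_p ≤ ε, |v·μ₀| ≤ δ and w·(x+v) + b > 0}) — equals 1 − Φ((‖μ‖₂ − δ)/σ). -/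

import Mathlib

open MeasureTheory ProbabilityTheory
open scoped ENNReal NNReal

/-- Euclidean inner product on `ℝ^d`. -/
noncomputable def dotp {d : ℕ} (w x : Fin d → ℝ) : ℝ := ∑ i, w i * x i

/-- The `ℓ₂` norm on `ℝ^d`. -/
noncomputable def l2 {d : ℕ} (w : Fin d → ℝ) : ℝ := Real.sqrt (∑ i, (w i)^2)

/-- The product Gaussian measure `N(m, σ²I_d)` on `ℝ^d`. -/
noncomputable def gaussPi {d : ℕ} (m : Fin d → ℝ) (σ : ℝ) : Measure (Fin d → ℝ) :=
  Measure.pi fun i => gaussianReal (m i) ((σ^2).toNNReal)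

/-- The standard normal cumulative distribution function `Φ`. -/
noncomputable def Phi (x : ℝ) : ℝ := ((gaussianReal 0 1) (Set.Iic x)).toReal

/-- The `ℓp` norm on `ℝ^d` for `p ∈ [1,∞]` (as an extended real exponent). -/
noncomputable def lpnorm {d : ℕ} (p : ℝ≥0∞) (v : Fin d → ℝ) : ℝ :=
  if p = ∞ then ⨆ i, |v i| else (∑ i, |v i| ^ p.toReal) ^ (1 / p.toReal)

/-- The `ℓp` norm on `ℝ^d` for a real exponent `p ∈ [1,∞)`. -/
noncomputable def lpR {d : ℕ} (p : ℝ) (v : Fin d → ℝ) : ℝ := (∑ i, |v i| ^ p) ^ (1/p)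

/-! Both strong-adversarial regions are half-spaces orthogonal to `μ₀`: a perturbation `v` moves
`μ₀ · x` by `μ₀ · v ∈ [-δ, δ]`, and the extreme shifts `∓δ` are attained by `v = ∓δ μ₀`, which lies
in the `ℓp` ball of radius `ε` because `δ ‖μ₀‖_p ≤ ε`. As `μ₀` is a unit vector, `μ₀ · x` is
`N(-b ± ‖μ‖₂, σ²)` under the two classes, so each half-space has mass `1 - Φ((‖μ‖₂ - δ)/σ)`. -/

section GaussianLinearForm

variable {ι : Type*} [Fintype ι]

theorem measurable_sum_mul (u : ι → ℝ) : Measurable fun x : ι → ℝ => ∑ i, u i * x i :=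
  Finset.measurable_sum _ fun i _ => (measurable_pi_apply i).const_mul _

theorem charFun_map_sum_mul_pi (μ : ι → Measure ℝ) [∀ i, IsProbabilityMeasure (μ i)]
    (u : ι → ℝ) (t : ℝ) :
    charFun ((Measure.pi μ).map fun x => ∑ i, u i * x i) t = ∏ i, charFun (μ i) (t * u i) := by
  simp_rw [charFun_apply_real]
  rw [integral_map (measurable_sum_mul u).aemeasurable (by fun_prop),
    ← integral_fintype_prod_eq_prod]
  congr 1 with x
  rw [← Complex.exp_sum]
  push_cast
  simp_rw [Finset.mul_sum, Finset.sum_mul, mul_assoc]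

theorem map_sum_mul_pi_gaussianReal (u m : ι → ℝ) (v : ι → ℝ≥0) :
    (Measure.pi fun i => gaussianReal (m i) (v i)).map (fun x => ∑ i, u i * x i)
      = gaussianReal (∑ i, u i * m i) (∑ i, u i ^ 2 * v i).toNNReal := by
  have := Measure.isProbabilityMeasure_map (μ := Measure.pi fun i => gaussianReal (m i) (v i))
    (measurable_sum_mul u).aemeasurable
  refine Measure.ext_of_charFun (funext fun t => ?_)
  simp_rw [charFun_map_sum_mul_pi, charFun_gaussianReal]
  rw [← Complex.exp_sum]
  congr 1
  rw [Real.coe_toNNReal _ (by positivity)]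
  push_cast
  simp only [Finset.mul_sum, Finset.sum_mul, Finset.sum_div, ← Finset.sum_sub_distrib]
  exact Finset.sum_congr rfl fun i _ => by ring

end GaussianLinearForm

theorem gaussianReal_real_Iic (m t : ℝ) {σ : ℝ} (hσ : 0 < σ) :
    (gaussianReal m (σ ^ 2).toNNReal).real (Set.Iic t) = Phi ((t - m) / σ) := by
  have hstd : (gaussianReal m (σ ^ 2).toNNReal).map (fun x => (x - m) / σ) = gaussianReal 0 1 := by
    rw [show (fun x => (x - m) / σ) = (· / σ) ∘ (· - m) from rfl,
      ← Measure.map_map (measurable_div_const σ) (measurable_sub_const m),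
      gaussianReal_map_sub_const, gaussianReal_map_div_const, sub_self, zero_div]
    congr 1
    ext
    simp [sq_nonneg, hσ.ne']
  rw [Phi, ← hstd, Measure.map_apply (by fun_prop) measurableSet_Iic, measureReal_def]
  congr 2 with x
  simp [div_le_div_iff_of_pos_right hσ]

theorem gaussianReal_real_Ioi (m t : ℝ) {σ : ℝ} (hσ : 0 < σ) :
    (gaussianReal m (σ ^ 2).toNNReal).real (Set.Ioi t) = 1 - Phi ((t - m) / σ) := by
  rw [← Set.compl_Iic, probReal_compl_eq_one_sub measurableSet_Iic, gaussianReal_real_Iic m t hσ]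

theorem Phi_neg (s : ℝ) : Phi (-s) = 1 - Phi s := by
  have hs : gaussianReal 0 1 {s} = 0 :=
    gaussianReal_absolutelyContinuous 0 one_ne_zero Real.volume_singleton
  have hsymm : gaussianReal 0 1 (Set.Iic (-s)) = gaussianReal 0 1 (Set.Ioi s) := by
    calc gaussianReal 0 1 (Set.Iic (-s))
        = (gaussianReal 0 1).map (fun x => -x) (Set.Iic (-s)) := by
          rw [gaussianReal_map_neg, neg_zero]
      _ = gaussianReal 0 1 (Set.Ici s) := by
          rw [Measure.map_apply measurable_neg measurableSet_Iic]
          congr 1 with x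
          simp
      _ = gaussianReal 0 1 (Set.Ioi s) := measure_congr (Ioi_ae_eq_Ici' hs).symm
  simpa [Phi, hsymm, ← measureReal_def] using
    probReal_compl_eq_one_sub (μ := gaussianReal 0 1) (measurableSet_Iic (a := s))

section Geometry

variable {d : ℕ}

theorem dotp_comm (v w : Fin d → ℝ) : dotp v w = dotp w v := dotProduct_comm v w

theorem dotp_add (w x v : Fin d → ℝ) : dotp w (x + v) = dotp w x + dotp w v := dotProduct_add w x v

theorem dotp_sub (w x v : Fin d → ℝ) : dotp w (x - v) = dotp w x - dotp w v := dotProduct_sub w x v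

theorem smul_dotp (c : ℝ) (v w : Fin d → ℝ) : dotp (c • v) w = c * dotp v w :=
  smul_dotProduct c v w

theorem l2_sq (μ : Fin d → ℝ) : l2 μ ^ 2 = dotp μ μ :=
  Real.sq_sqrt (Finset.sum_nonneg fun i _ => sq_nonneg (μ i)) |>.trans
    (Finset.sum_congr rfl fun i _ => sq (μ i))

theorem l2_pos {μ : Fin d → ℝ} (hμ : μ ≠ 0) : 0 < l2 μ := by
  refine Real.sqrt_pos.2 (lt_of_le_of_ne (Finset.sum_nonneg fun i _ => sq_nonneg (μ i)) ?_)
  intro h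
  refine hμ (dotProduct_self_eq_zero.1 ?_)
  simp only [dotProduct, ← sq, ← h]

theorem dotp_normalize {μ : Fin d → ℝ} (hμ : μ ≠ 0) : dotp ((l2 μ)⁻¹ • μ) μ = l2 μ := by
  rw [smul_dotp, ← l2_sq]
  field_simp [(l2_pos hμ).ne']

theorem dotp_normalize_self {μ : Fin d → ℝ} (hμ : μ ≠ 0) :
    dotp ((l2 μ)⁻¹ • μ) ((l2 μ)⁻¹ • μ) = 1 := by
  rw [dotp_comm, smul_dotp, dotp_comm, dotp_normalize hμ, inv_mul_cancel₀ (l2_pos hμ).ne']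

theorem lpnorm_nonneg (p : ℝ≥0∞) (v : Fin d → ℝ) : 0 ≤ lpnorm p v := by
  unfold lpnorm
  split_ifs
  · exact Real.iSup_nonneg fun i => abs_nonneg _
  · exact Real.rpow_nonneg (Finset.sum_nonneg fun i _ => Real.rpow_nonneg (abs_nonneg _) _) _

theorem lpnorm_smul {p : ℝ≥0∞} (hp : p ≠ 0) (c : ℝ) (v : Fin d → ℝ) :
    lpnorm p (c • v) = |c| * lpnorm p v := by
  unfold lpnorm
  split_ifs with htop
  · simp_rw [Pi.smul_apply, smul_eq_mul, abs_mul]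
    exact (Real.mul_iSup_of_nonneg (abs_nonneg c) _).symm
  · have hpos : 0 < p.toReal := ENNReal.toReal_pos hp htop
    simp_rw [Pi.smul_apply, smul_eq_mul, abs_mul, Real.mul_rpow (abs_nonneg c) (abs_nonneg _)]
    rw [← Finset.mul_sum, Real.mul_rpow (by positivity) (by positivity),
      ← Real.rpow_mul (abs_nonneg c), mul_one_div_cancel hpos.ne', Real.rpow_one]

variable {p : ℝ≥0∞} {ε δ : ℝ} {w : Fin d → ℝ}

theorem exists_lpnorm_le_dotp_eq (hp : p ≠ 0) (hw : dotp w w = 1) (hδε : δ * lpnorm p w ≤ ε)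
    {c : ℝ} (hc : |c| ≤ δ) : ∃ v, lpnorm p v ≤ ε ∧ |dotp v w| ≤ δ ∧ dotp w v = c := by
  have hcw : dotp (c • w) w = c := by rw [smul_dotp, hw, mul_one]
  refine ⟨c • w, ?_, by rwa [hcw], by rwa [dotp_comm]⟩
  rw [lpnorm_smul hp]
  exact (mul_le_mul_of_nonneg_right hc (lpnorm_nonneg p w)).trans hδε

theorem setOf_strongAdv_nonpos (hp : p ≠ 0) (hw : dotp w w = 1) (hδ : 0 ≤ δ)
    (hδε : δ * lpnorm p w ≤ ε) (b : ℝ) :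
    {x | dotp w x + b ≤ 0 ∨ ∃ v, lpnorm p v ≤ ε ∧ |dotp v w| ≤ δ ∧ dotp w (x + v) + b ≤ 0}
      = {x | dotp w x ≤ δ - b} := by
  ext x
  simp only [Set.mem_ofPred_eq, dotp_add]
  constructor
  · rintro (h | ⟨v, -, hv, h⟩)
    · linarith
    · linarith [(abs_le.1 hv).1, dotp_comm v w]
  · intro h
    obtain ⟨v, hvε, hvw, hv⟩ :=
      exists_lpnorm_le_dotp_eq hp hw hδε (c := -δ) (by rw [abs_neg, abs_of_nonneg hδ])
    exact Or.inr ⟨v, hvε, hvw, by linarith⟩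

theorem setOf_strongAdv_pos (hp : p ≠ 0) (hw : dotp w w = 1) (hδ : 0 ≤ δ)
    (hδε : δ * lpnorm p w ≤ ε) (b : ℝ) :
    {x | 0 < dotp w x + b ∨ ∃ v, lpnorm p v ≤ ε ∧ |dotp v w| ≤ δ ∧ 0 < dotp w (x + v) + b}
      = {x | -δ - b < dotp w x} := by
  ext x
  simp only [Set.mem_ofPred_eq, dotp_add]
  constructor
  · rintro (h | ⟨v, -, hv, h⟩)
    · linarith
    · linarith [(abs_le.1 hv).2, dotp_comm v w]
  · intro h
    obtain ⟨v, hvε, hvw, hv⟩ :=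
      exists_lpnorm_le_dotp_eq hp hw hδε (c := δ) (abs_of_nonneg hδ).le
    exact Or.inr ⟨v, hvε, hvw, by linarith⟩

end Geometry

section HalfSpace

variable {d : ℕ} {w : Fin d → ℝ} {σ : ℝ}

theorem measurable_dotp (w : Fin d → ℝ) : Measurable (dotp w) := measurable_sum_mul w

theorem map_dotp_gaussPi (hw : dotp w w = 1) (m : Fin d → ℝ) :
    (gaussPi m σ).map (dotp w) = gaussianReal (dotp w m) (σ ^ 2).toNNReal := by
  have hw' : ∑ i, w i ^ 2 = 1 := (Finset.sum_congr rfl fun i _ => sq (w i)).trans hw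
  rw [gaussPi, show dotp w = fun x => ∑ i, w i * x i from rfl, map_sum_mul_pi_gaussianReal,
    ← Finset.sum_mul, hw', one_mul, Real.toNNReal_coe]

theorem gaussPi_real_dotp_le (hw : dotp w w = 1) (hσ : 0 < σ) (m : Fin d → ℝ) (t : ℝ) :
    (gaussPi m σ).real {x | dotp w x ≤ t} = Phi ((t - dotp w m) / σ) := by
  rw [← gaussianReal_real_Iic _ _ hσ, ← map_dotp_gaussPi hw,
    map_measureReal_apply (measurable_dotp w) measurableSet_Iic]
  rfl

theorem gaussPi_real_lt_dotp (hw : dotp w w = 1) (hσ : 0 < σ) (m : Fin d → ℝ) (t : ℝ) :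
    (gaussPi m σ).real {x | t < dotp w x} = 1 - Phi ((t - dotp w m) / σ) := by
  rw [← gaussianReal_real_Ioi _ _ hσ, ← map_dotp_gaussPi hw,
    map_measureReal_apply (measurable_dotp w) measurableSet_Ioi]
  rfl

end HalfSpace

theorem bayes_lp_strong_adversarial_error_general {d : ℕ}
    (p : ℝ≥0∞) (hp : 1 ≤ p) (ε δ : ℝ) (hδ : 0 ≤ δ)
    (μp μm : Fin d → ℝ) (σ : ℝ) (hσ : 0 < σ)
    (μ μbar μ₀ : Fin d → ℝ)
    (hμ : μ = (1/2 : ℝ) • (μp - μm)) (hμne : μ ≠ 0) (hμ₀ : μ₀ = (l2 μ)⁻¹ • μ)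
    (hμbar : μbar = (1/2 : ℝ) • (μp + μm))
    (w : Fin d → ℝ) (b : ℝ) (hw : w = μ₀) (hb : b = -(dotp μ₀ μbar))
    (hδε : δ * lpnorm p μ₀ ≤ ε) :
    (1/2) * ((gaussPi μp σ) {x : Fin d → ℝ | dotp w x + b ≤ 0 ∨
        ∃ v : Fin d → ℝ, lpnorm p v ≤ ε ∧ |dotp v μ₀| ≤ δ ∧
          dotp w (x + v) + b ≤ 0}).toReal
      + (1/2) * ((gaussPi μm σ) {x : Fin d → ℝ | 0 < dotp w x + b ∨
          ∃ v : Fin d → ℝ, lpnorm p v ≤ ε ∧ |dotp v μ₀| ≤ δ ∧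
            0 < dotp w (x + v) + b}).toReal
      = 1 - Phi ((l2 μ - δ) / σ) := by
  subst w
  have hp0 : p ≠ 0 := (zero_lt_one.trans_le hp).ne'
  have hunit : dotp μ₀ μ₀ = 1 := hμ₀ ▸ dotp_normalize_self hμne
  have hmargin : dotp μ₀ μ = l2 μ := hμ₀ ▸ dotp_normalize hμne
  have hμp : dotp μ₀ μp = -b + l2 μ := by
    rw [show μp = μbar + μ by subst hμ hμbar; module, dotp_add, hmargin, hb, neg_neg]
  have hμm : dotp μ₀ μm = -b - l2 μ := by
    rw [show μm = μbar - μ by subst hμ hμbar; module, dotp_sub, hmargin, hb, neg_neg]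
  rw [setOf_strongAdv_nonpos hp0 hunit hδ hδε, setOf_strongAdv_pos hp0 hunit hδ hδε,
    ← measureReal_def, ← measureReal_def, gaussPi_real_dotp_le hunit hσ,
    gaussPi_real_lt_dotp hunit hσ, hμp, hμm,
    show (δ - b - (-b + l2 μ)) / σ = -((l2 μ - δ) / σ) by ring, Phi_neg,
    show (-δ - b - (-b - l2 μ)) / σ = (l2 μ - δ) / σ by ring]
  ring

/-- the `(ε,δ)`-`ℓp`-strong-adversarial-error rate of the Bayes
classifier (`w = μ₀`, `b = −μ₀·μ̄`) equals `1 − Φ((‖μ‖₂ − δ)/σ)`. -/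
theorem bayes_lp_strong_adversarial_error {d : ℕ} (hd : 1 ≤ d)
    (p : ℝ≥0∞) (hp : 1 ≤ p) (ε δ : ℝ) (hε : 0 < ε) (hδ : 0 ≤ δ)
    (μp μm : Fin d → ℝ) (σ : ℝ) (hσ : 0 < σ)
    (μ μbar μ₀ : Fin d → ℝ)
    (hμ : μ = (1/2 : ℝ) • (μp - μm)) (hμne : μ ≠ 0) (hμ₀ : μ₀ = (l2 μ)⁻¹ • μ)
    (hμbar : μbar = (1/2 : ℝ) • (μp + μm))
    (w : Fin d → ℝ) (b : ℝ) (hw : w = μ₀) (hb : b = -(dotp μ₀ μbar))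
    (hδε : δ * lpnorm p μ₀ ≤ ε) :
    (1/2) * ((gaussPi μp σ) {x : Fin d → ℝ | dotp w x + b ≤ 0 ∨
        ∃ v : Fin d → ℝ, lpnorm p v ≤ ε ∧ |dotp v μ₀| ≤ δ ∧
          dotp w (x + v) + b ≤ 0}).toReal
      + (1/2) * ((gaussPi μm σ) {x : Fin d → ℝ | 0 < dotp w x + b ∨
          ∃ v : Fin d → ℝ, lpnorm p v ≤ ε ∧ |dotp v μ₀| ≤ δ ∧
            0 < dotp w (x + v) + b}).toReal
      = 1 - Phi ((l2 μ - δ) / σ) :=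
  bayes_lp_strong_adversarial_error_general p hp ε δ hδ μp μm σ hσ μ μbar μ₀ hμ hμne hμ₀ hμbar w b
    hw hb hδε
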